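/- arXiv:2507.11370 — 5 statements merged into one kernel-verified Lean document; each statement's English description precedes it below -/
import Mathlib

section
/- Let f(z) = sin(z)/2. If z ∈ ℂ satisfies 0 < |Im z| < t₀, where t₀ is the unique positive fixed point of t ↦ sinh(t)/2, then |Im f(z)| < |Im z|. -/
/-!
Since `Im (sin z) = cos (Re z) * sinh (Im z)`, we have `|Im f(z)| ≤ sinh |Im z| / 2`. By strict
convexity of `sinh` on `[0, ∞)` and `sinh 0 = 0`, the ratio `sinh t / t` is strictly increasing
there; it equals `2` at `t₀`, so `sinh t / 2 < t` for `0 < t < t₀`.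
-/

open Real Set

theorem Real.strictConvexOn_sinh : StrictConvexOn ℝ (Ici 0) sinh := by
  refine StrictMonoOn.strictConvexOn_of_deriv (convex_Ici 0) continuous_sinh.continuousOn ?_
  rw [deriv_sinh, interior_Ici]
  exact cosh_strictMonoOn.mono Ioi_subset_Ici_self

theorem Real.sinh_div_self_lt_sinh_div_self {s t : ℝ} (hs : 0 < s) (hst : s < t) :
    sinh s / s < sinh t / t := by
  simpa using strictConvexOn_sinh.secant_strict_mono_aux2 self_mem_Ici (hs.trans hst).le hs hst

theorem Complex.im_sin (z : ℂ) : (sin z).im = Real.cos z.re * Real.sinh z.im := by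
  conv_lhs => rw [← re_add_im z, sin_add_mul_I]
  simp [cos_ofReal_re, sinh_ofReal_re, sin_ofReal_im, cosh_ofReal_im]

theorem Complex.abs_im_sin_le (z : ℂ) : |(sin z).im| ≤ Real.sinh |z.im| := by
  rw [im_sin, abs_mul, ← abs_sinh]
  exact mul_le_of_le_one_left (abs_nonneg _) (abs_cos_le_one _)

theorem stmt_1_general (f : ℂ → ℂ) (hf : ∀ z, f z = Complex.sin z / 2)
    (t₀ : ℝ) (hfix : Real.sinh t₀ / 2 = t₀)
    (z : ℂ) (h1 : 0 < |z.im|) (h2 : |z.im| < t₀) :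
    |(f z).im| < |z.im| := by
  have hratio : sinh |z.im| / |z.im| < 2 := by
    have ht₀ : sinh t₀ / t₀ = 2 := by
      rw [div_eq_iff (h1.trans h2).ne']
      linarith
    exact ht₀ ▸ sinh_div_self_lt_sinh_div_self h1 h2
  have hsinh : sinh |z.im| < 2 * |z.im| := (div_lt_iff₀ h1).mp hratio
  calc |(f z).im| = |(Complex.sin z).im| / 2 := by
        rw [hf, Complex.div_ofNat_im, abs_div, abs_two]
    _ ≤ sinh |z.im| / 2 := by gcongr; exact Complex.abs_im_sin_le z
    _ < |z.im| := by linarith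

/-- For `f(z) = sin(z)/2`: if `0 < |Im z| < t₀`, where `t₀` is the unique positive
fixed point of `t ↦ sinh(t)/2`, then `|Im f(z)| < |Im z|`. -/
theorem stmt_1 (f : ℂ → ℂ) (hf : ∀ z, f z = Complex.sin z / 2)
    (t₀ : ℝ) (ht₀ : 0 < t₀) (hfix : Real.sinh t₀ / 2 = t₀)
    (huniq : ∀ t : ℝ, 0 < t → Real.sinh t / 2 = t → t = t₀)
    (z : ℂ) (h1 : 0 < |z.im|) (h2 : |z.im| < t₀) :
    |(f z).im| < |z.im| :=
  stmt_1_general f hf t₀ hfix z h1 h2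
end

section
/- A non-degenerate continuum (compact connected metric space with more than one point) admitting a total ordering whose order topology agrees with its metric topology is homeomorphic to the closed interval [0,1]. -/
/-!
A connected linear order is densely ordered, and in a compact one every set has a supremum, so
`X` is a complete dense linear order. Being a compact metric space it has a countable dense set,
which is dense in the order sense. By Cantor's back-and-forth theorem this set, with the endpoints
removed, is order isomorphic to `ℚ`, as are the rationals in `(0, 1)`; an order isomorphism between
order-dense subsets of two complete linear orders extends by `x ↦ ⨆ {g d | d < x}` to an order
isomorphism of the whole orders. Finally an order isomorphism is a homeomorphism for the order
topologies.
-/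

open Set

def Set.OrderDense {α : Type*} [Preorder α] (s : Set α) : Prop :=
  ∀ ⦃a b⦄, a < b → ∃ c ∈ s, c ∈ Ioo a b

theorem Set.OrderDense.inter_Ioo_bot_top {α : Type*} [Preorder α] [BoundedOrder α] {s : Set α}
    (hs : s.OrderDense) : (s ∩ Ioo ⊥ ⊤).OrderDense := fun _ _ hxy ↦
  let ⟨c, hc, hxc, hcy⟩ := hs hxy
  ⟨c, ⟨hc, bot_le.trans_lt hxc, hcy.trans_le le_top⟩, hxc, hcy⟩

namespace OrderIso

variable {X Y : Type*} [CompleteLinearOrder X] [CompleteLinearOrder Y] {s : Set X} {t : Set Y}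

noncomputable def supExtend (g : s ≃o t) (x : X) : Y :=
  ⨆ (d : s) (_ : (d : X) < x), (g d : Y)

theorem monotone_supExtend (g : s ≃o t) : Monotone (supExtend g) :=
  fun _ _ hxy ↦ iSup₂_mono' fun d hd ↦ ⟨d, hd.trans_le hxy, le_rfl⟩

theorem supExtend_supExtend_symm (ht : t.OrderDense) (g : s ≃o t) (y : Y) :
    supExtend g (supExtend g.symm y) = y := by
  apply le_antisymm
  · refine iSup₂_le fun d hd ↦ ?_
    obtain ⟨e, he, hde⟩ := by simpa only [supExtend, lt_iSup_iff, exists_prop] using hd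
    exact (Subtype.coe_lt_coe.2 (g.lt_symm_apply.1 hde)).le.trans he.le
  · refine le_of_forall_lt fun c hc ↦ ?_
    obtain ⟨e, het, hce, hey⟩ := ht hc
    obtain ⟨e', het', hee', he'y⟩ := ht hey
    have : (g.symm ⟨e, het⟩ : X) < supExtend g.symm y :=
      (Subtype.coe_lt_coe.2 (g.symm.lt_iff_lt.2 (Subtype.mk_lt_mk.2 hee'))).trans_le
        (le_iSup₂_of_le ⟨e', het'⟩ he'y le_rfl)
    exact hce.trans_le (le_iSup₂_of_le (g.symm ⟨e, het⟩) this (by simp))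

noncomputable def extendOfOrderDense (hs : s.OrderDense) (ht : t.OrderDense) (g : s ≃o t) :
    X ≃o Y :=
  Equiv.toOrderIso
    ⟨supExtend g, supExtend g.symm, supExtend_supExtend_symm hs g.symm,
      supExtend_supExtend_symm ht g⟩
    (monotone_supExtend g) (monotone_supExtend g.symm)

end OrderIso

theorem Set.OrderDense.nonempty_orderIso_rat {X : Type*} [LinearOrder X] [BoundedOrder X]
    [Nontrivial X] {s : Set X} (hs : s.OrderDense) (hsc : s.Countable) :
    Nonempty (↥(s ∩ Ioo ⊥ ⊤) ≃o ℚ) := by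
  have : Countable ↥(s ∩ Ioo ⊥ ⊤) := (hsc.mono inter_subset_left).to_subtype
  have : Nonempty ↥(s ∩ Ioo ⊥ ⊤) :=
    let ⟨c, hc⟩ := hs (bot_lt_top (α := X))
    ⟨⟨c, hc⟩⟩
  have : DenselyOrdered ↥(s ∩ Ioo ⊥ ⊤) := ⟨fun x y hxy ↦
    let ⟨c, hc, hxc, hcy⟩ := hs hxy
    ⟨⟨c, hc, x.2.2.1.trans hxc, hcy.trans y.2.2.2⟩, hxc, hcy⟩⟩
  have : NoMinOrder ↥(s ∩ Ioo ⊥ ⊤) := ⟨fun x ↦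
    let ⟨c, hc, hbc, hcx⟩ := hs x.2.2.1
    ⟨⟨c, hc, hbc, hcx.trans x.2.2.2⟩, hcx⟩⟩
  have : NoMaxOrder ↥(s ∩ Ioo ⊥ ⊤) := ⟨fun x ↦
    let ⟨c, hc, hxc, hct⟩ := hs x.2.2.2
    ⟨⟨c, hc, x.2.2.1.trans hxc, hct⟩, hxc⟩⟩
  exact Order.iso_of_countable_dense _ _

theorem nonempty_orderIso_of_countable_orderDense {X Y : Type*} [CompleteLinearOrder X]
    [CompleteLinearOrder Y] [Nontrivial X] [Nontrivial Y] {s : Set X} {t : Set Y}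
    (hs : s.OrderDense) (hsc : s.Countable) (ht : t.OrderDense) (htc : t.Countable) :
    Nonempty (X ≃o Y) :=
  let ⟨e⟩ := hs.nonempty_orderIso_rat hsc
  let ⟨f⟩ := ht.nonempty_orderIso_rat htc
  ⟨.extendOfOrderDense hs.inter_Ioo_bot_top ht.inter_Ioo_bot_top (e.trans f.symm)⟩

theorem Real.orderDense_Icc_rat (a b : ℝ) :
    (Subtype.val ⁻¹' range ((↑) : ℚ → ℝ) : Set (Icc a b)).OrderDense := fun x y hxy ↦
  let ⟨q, hxq, hqy⟩ := exists_rat_btwn (Subtype.coe_lt_coe.2 hxy)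
  ⟨⟨q, x.2.1.trans hxq.le, hqy.le.trans y.2.2⟩, ⟨q, rfl⟩, hxq, hqy⟩

theorem Real.countable_Icc_rat (a b : ℝ) :
    (Subtype.val ⁻¹' range ((↑) : ℚ → ℝ) : Set (Icc a b)).Countable :=
  (countable_range _).preimage Subtype.val_injective

theorem CompactSpace.exists_isLUB {X : Type*} [TopologicalSpace X] [LinearOrder X]
    [OrderClosedTopology X] [CompactSpace X] [Nonempty X] (S : Set X) : ∃ x, IsLUB S x := by
  have hclosed : IsClosed (upperBounds S) := by
    rw [show upperBounds S = ⋂ y ∈ S, Ici y by ext; simp [upperBounds]]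
    exact isClosed_biInter fun _ _ ↦ isClosed_Ici
  obtain ⟨top, -, htop⟩ := isCompact_univ.exists_isGreatest univ_nonempty (α := X)
  exact hclosed.isCompact.exists_isLeast ⟨top, fun y _ ↦ htop (mem_univ y)⟩

noncomputable abbrev CompactSpace.completeLinearOrder (X : Type*) [TopologicalSpace X]
    [LinearOrder X] [OrderClosedTopology X] [CompactSpace X] [Nonempty X] :
    CompleteLinearOrder X :=
  -- `⊔`, `⊓` come from the given linear order, so the order is definitionally the given one
  letI : SupSet X := ⟨fun S ↦ (exists_isLUB S).choose⟩
  letI : CompleteLattice X :=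
    { LinearOrder.toLattice, completeLatticeOfSup X fun S ↦ (exists_isLUB S).choose_spec with }
  { this, ‹LinearOrder X›, LinearOrder.toBiheytingAlgebra X with }

/-- A non-degenerate continuum (compact connected metric space with more than one point)
admitting a total ordering whose order topology agrees with its metric topology is
homeomorphic to the closed interval `[0,1]`. -/
theorem stmt_6 (X : Type*) [MetricSpace X] [CompactSpace X] [ConnectedSpace X]
    [Nontrivial X] [LinearOrder X] [OrderTopology X] :
    Nonempty (X ≃ₜ (Set.Icc (0 : ℝ) 1)) := by
  have : DenselyOrdered X := denselyOrdered_of_preconnectedSpace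
  let _ : CompleteLinearOrder X := CompactSpace.completeLinearOrder X
  obtain ⟨D, hDc, hD⟩ := TopologicalSpace.exists_countable_dense X
  obtain ⟨e⟩ := nonempty_orderIso_of_countable_orderDense (fun _ _ ↦ hD.exists_between) hDc
    (Real.orderDense_Icc_rat 0 1) (Real.countable_Icc_rat 0 1)
  exact ⟨e.toHomeomorph⟩
end

section
/- For every ρ ∈ (0,1) there exists a constant c > 0 such that: if h : 𝔻 → ℂ is holomorphic on the unit disc with h(0) = 0 and max_{|z|=ρ} |h(z)| ≥ 1, then there exists R ≥ c such that the entire circle {w : |w| = R} is contained in the image h(𝔻). -/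
/-!
If `h` omitted a point `ω₁` of the circle of radius `c` and a point `ω₂` of the circle of radius
`2c`, then `(h - ω₁) / (ω₂ - ω₁)` would omit `0` and `1` and have modulus in `[1/3, 1]` at `0`.
Schottky's theorem bounds such a function on `‖z‖ ≤ ρ` by a constant depending only on `ρ`, so
`‖h‖ ≤ C c` there, which is `< 1` once `c` is small.

Schottky's theorem is proved along Landau's route: write `g = exp (2πi cosh² v)` with `v`
holomorphic. Then `v` omits the points `arsinh j + mπi` (`j, m ∈ ℤ`), which form a `3`-net of `ℂ`,
and a holomorphic function on a disc of radius `r` omitting a `d`-net has derivative at the centre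
at most `128 d / r` (Bloch's rescaling argument with the Schwarz lemma and the quantitative open
mapping theorem). Hence `v`, and with it `g`, is bounded on `‖z‖ ≤ ρ`.
-/

open Metric Set Complex Filter Topology

theorem exists_log_of_ne_zero {f : ℂ → ℂ} {c : ℂ} {r : ℝ}
    (hf : DifferentiableOn ℂ f (ball c r)) (hf0 : ∀ z ∈ ball c r, f z ≠ 0) :
    ∃ L : ℂ → ℂ, DifferentiableOn ℂ L (ball c r) ∧ L c = log (f c) ∧
      ∀ z ∈ ball c r, exp (L z) = f z := by
  have hf' : DifferentiableOn ℂ (deriv f) (ball c r) :=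
    (hf.analyticOnNhd isOpen_ball).deriv.differentiableOn
  obtain ⟨L, hLc, hL⟩ := (hf'.div hf hf0).isExactOn_ball.with_val_at c (log (f c))
  have hLd : DifferentiableOn ℂ L (ball c r) := fun z hz =>
    (hL z hz).differentiableAt.differentiableWithinAt
  refine ⟨L, hLd, hLc, fun z hz => ?_⟩
  have hc : c ∈ ball c r := mem_ball_self (pos_of_mem_ball hz)
  have hderiv : EqOn (deriv fun w => f w * exp (-L w)) 0 (ball c r) := fun w hw => by
    have hfw := (hf.differentiableAt (isOpen_ball.mem_nhds hw)).hasDerivAt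
    have hw' := hfw.mul (hL w hw).neg.cexp
    simp only [Pi.neg_apply, Pi.div_apply] at hw'
    refine hw'.deriv.trans ?_
    field_simp [hf0 w hw]
    simp
  have hD : DifferentiableOn ℂ (fun w => f w * exp (-L w)) (ball c r) := hf.mul hLd.neg.cexp
  have hconst := isOpen_ball.is_const_of_deriv_eq_zero (convex_ball c r).isPreconnected
    hD hderiv hz hc
  simp only [hLc, exp_neg, exp_log (hf0 c hc), mul_inv_cancel₀ (hf0 c hc)] at hconst
  exact (eq_of_mul_inv_eq_one hconst).symm

theorem exists_sq_eq_of_ne_zero {f : ℂ → ℂ} {c : ℂ} {r : ℝ}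
    (hf : DifferentiableOn ℂ f (ball c r)) (hf0 : ∀ z ∈ ball c r, f z ≠ 0) :
    ∃ s : ℂ → ℂ, DifferentiableOn ℂ s (ball c r) ∧ ∀ z ∈ ball c r, s z ^ 2 = f z := by
  obtain ⟨L, hLd, -, hL⟩ := exists_log_of_ne_zero hf hf0
  refine ⟨fun z => exp (L z / 2), (hLd.div_const 2).cexp, fun z hz => ?_⟩
  rw [← exp_nat_mul, ← hL z hz]
  ring_nf

theorem norm_log_le {ζ : ℂ} {a : ℝ} (h₁ : a⁻¹ ≤ ‖ζ‖) (h₂ : ‖ζ‖ ≤ a) :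
    ‖log ζ‖ ≤ Real.log a + Real.pi := by
  rcases eq_or_ne ζ 0 with rfl | hζ
  · obtain rfl : a = 0 := le_antisymm (by simpa using h₁) (by simpa using h₂)
    simp [Real.pi_pos.le]
  have hζ' : 0 < ‖ζ‖ := norm_pos_iff.mpr hζ
  have ha : 0 < a := hζ'.trans_le h₂
  have hre : |(log ζ).re| ≤ Real.log a := by
    rw [log_re, abs_le]
    constructor
    · rw [neg_le, ← Real.log_inv]
      exact Real.log_le_log (inv_pos.mpr hζ') ((inv_le_comm₀ ha hζ').mp h₁)
    · exact Real.log_le_log hζ' h₂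
  calc ‖log ζ‖ ≤ |(log ζ).re| + |(log ζ).im| := norm_le_abs_re_add_abs_im _
    _ ≤ Real.log a + Real.pi := add_le_add hre (by rw [log_im]; exact abs_arg_le_pi ζ)

theorem norm_cosh_le_exp_norm (z : ℂ) : ‖cosh z‖ ≤ Real.exp ‖z‖ := by
  rw [cosh, norm_div, Complex.norm_two]
  have h₁ := norm_exp_le_exp_norm z
  have h₂ := norm_exp_le_exp_norm (-z)
  rw [norm_neg] at h₂
  linarith [norm_add_le (exp z) (exp (-z))]

-- `v = log (√u - √(u - 1))` is a holomorphic branch of `arcosh √u`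
theorem exists_cosh_sq_eq {u : ℂ → ℂ} {c : ℂ} {r : ℝ} (hr : 0 < r)
    (hu : DifferentiableOn ℂ u (ball c r)) (hu0 : ∀ z ∈ ball c r, u z ≠ 0)
    (hu1 : ∀ z ∈ ball c r, u z ≠ 1) (huc : ‖u c‖ ≤ 1) :
    ∃ v : ℂ → ℂ, DifferentiableOn ℂ v (ball c r) ∧ ‖v c‖ ≤ Real.log 3 + Real.pi ∧
      ∀ z ∈ ball c r, cosh (v z) ^ 2 = u z := by
  obtain ⟨s, hsd, hs⟩ := exists_sq_eq_of_ne_zero hu hu0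
  obtain ⟨t, htd, ht⟩ := exists_sq_eq_of_ne_zero (hu.sub_const 1)
    fun z hz => sub_ne_zero.mpr (hu1 z hz)
  have hst : ∀ z ∈ ball c r, (s z - t z) * (s z + t z) = 1 := fun z hz => by
    linear_combination hs z hz - ht z hz
  obtain ⟨v, hvd, hvc, hv⟩ := exists_log_of_ne_zero (hsd.sub htd)
    fun z hz => left_ne_zero_of_mul_eq_one (hst z hz)
  simp only [Pi.sub_apply] at hvc hv
  refine ⟨v, hvd, ?_, fun z hz => ?_⟩
  · have hc : c ∈ ball c r := mem_ball_self hr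
    have hsc : ‖s c‖ ≤ 1 := by
      have : ‖s c‖ ^ 2 ≤ 1 := by rw [← norm_pow, hs c hc]; exact huc
      nlinarith [norm_nonneg (s c)]
    have htc : ‖t c‖ ≤ 3 / 2 := by
      have : ‖t c‖ ^ 2 ≤ 2 := by
        rw [← norm_pow, ht c hc]
        linarith [norm_sub_le (u c) 1, norm_one (α := ℂ)]
      nlinarith [norm_nonneg (t c)]
    have hsum : ‖s c + t c‖ ≤ 3 := by linarith [norm_add_le (s c) (t c)]
    have hdiff : ‖s c - t c‖ ≤ 3 := by linarith [norm_sub_le (s c) (t c)]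
    have hprod : ‖s c - t c‖ * ‖s c + t c‖ = 1 := by rw [← norm_mul, hst c hc, norm_one]
    rw [hvc]
    refine norm_log_le ?_ hdiff
    rw [inv_le_iff_one_le_mul₀ (by norm_num)]
    nlinarith [norm_nonneg (s c - t c)]
  · have hexp : exp (-v z) = s z + t z := by
      rw [exp_neg, hv z hz]
      exact (eq_inv_of_mul_eq_one_right (hst z hz)).symm
    rw [cosh, hexp, hv z hz, ← hs z hz]
    ring

theorem Real.abs_arsinh_sub_arsinh_le (a b : ℝ) : |Real.arsinh a - Real.arsinh b| ≤ |a - b| := by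
  wlog hab : b ≤ a generalizing a b
  · rw [abs_sub_comm, abs_sub_comm a]
    exact this b a (le_of_not_ge hab)
  have h := Real.sinh_sub_id_strictMono.monotone (Real.arsinh_le_arsinh.mpr hab)
  simp only [Real.sinh_arsinh] at h
  rw [abs_of_nonneg (sub_nonneg.mpr (Real.arsinh_le_arsinh.mpr hab)),
    abs_of_nonneg (sub_nonneg.mpr hab)]
  linarith

theorem cosh_sq_add_int_mul_pi_mul_I (z : ℂ) (m : ℤ) :
    cosh (z + m * Real.pi * I) ^ 2 = cosh z ^ 2 := by
  have hcos : cos (m * Real.pi) ^ 2 = 1 := by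
    simpa [sin_int_mul_pi] using sin_sq_add_cos_sq ((m : ℂ) * Real.pi)
  rw [cosh_add, cosh_mul_I, sinh_mul_I, sin_int_mul_pi, zero_mul, mul_zero, add_zero, mul_pow,
    hcos, mul_one]

-- the points `arsinh j + m π i` with `j, m ∈ ℤ` form a 3-net of `ℂ`
theorem exists_dist_le_three_cosh_sq_eq_intCast (w : ℂ) :
    ∃ ω : ℂ, (∃ k : ℤ, cosh ω ^ 2 = k) ∧ dist ω w ≤ 3 := by
  set j : ℤ := round (Real.sinh w.re)
  set m : ℤ := round (w.im / Real.pi)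
  refine ⟨Real.arsinh j + m * Real.pi * I, ⟨1 + j ^ 2, ?_⟩, ?_⟩
  · rw [cosh_sq_add_int_mul_pi_mul_I, cosh_sq, ← ofReal_sinh, Real.sinh_arsinh]
    push_cast
    ring
  · have hre : |Real.arsinh j - w.re| ≤ 1 / 2 := by
      calc |Real.arsinh j - w.re| = |Real.arsinh j - Real.arsinh (Real.sinh w.re)| := by
            rw [Real.arsinh_sinh]
        _ ≤ |j - Real.sinh w.re| := Real.abs_arsinh_sub_arsinh_le _ _
        _ ≤ 1 / 2 := by rw [abs_sub_comm]; exact abs_sub_round _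
    have him : |m * Real.pi - w.im| ≤ Real.pi / 2 := by
      have := abs_sub_round (w.im / Real.pi)
      calc |m * Real.pi - w.im| = |w.im / Real.pi - m| * Real.pi := by
            rw [← abs_of_pos Real.pi_pos, ← abs_mul, abs_of_pos Real.pi_pos, abs_sub_comm]
            congr 1
            field_simp
        _ ≤ 1 / 2 * Real.pi := by gcongr
        _ = Real.pi / 2 := by ring
    rw [dist_eq_norm]
    refine (norm_le_abs_re_add_abs_im _).trans ?_
    simp only [sub_re, add_re, ofReal_re, mul_re, intCast_re, intCast_im, ofReal_im, mul_zero,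
      sub_zero, I_re, mul_im, zero_mul, add_zero, I_im, mul_one, sub_self, sub_im, add_im, zero_add]
    linarith [Real.pi_lt_d2]

theorem norm_sub_sub_mul_deriv_le {f : ℂ → ℂ} {a : ℂ} {r s M : ℝ} (hrs : r < s)
    (hf : DifferentiableOn ℂ f (ball a s))
    (hM : ∀ w ∈ closedBall a r, ‖deriv f w - deriv f a‖ ≤ M) {z : ℂ} (hz : z ∈ closedBall a r) :
    ‖f z - f a - (z - a) * deriv f a‖ ≤ M * ‖z - a‖ := by
  have hderiv : ∀ w ∈ closedBall a r,
      HasDerivAt (fun w => f w - w * deriv f a) (deriv f w - deriv f a) w := fun w hw =>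
    ((hf.differentiableAt (isOpen_ball.mem_nhds (closedBall_subset_ball hrs hw))).hasDerivAt.sub
      ((hasDerivAt_id' w).mul_const (deriv f a))).congr_deriv (by rw [one_mul])
  have := (convex_closedBall a r).norm_image_sub_le_of_norm_hasDerivWithin_le
    (fun w hw => (hderiv w hw).hasDerivWithinAt) hM
    (mem_closedBall_self (dist_nonneg.trans (mem_closedBall.mp hz))) hz
  rwa [show f z - z * deriv f a - (f a - a * deriv f a) = f z - f a - (z - a) * deriv f a by ring]
    at this

-- Schwarz's lemma for `f'`, which maps `ball a s` into `closedBall (f' a) (3 ‖f' a‖)`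
theorem dist_deriv_le_of_norm_deriv_le {f : ℂ → ℂ} {a : ℂ} {s : ℝ}
    (hf : DifferentiableOn ℂ f (ball a s))
    (hbound : ∀ z ∈ ball a s, ‖deriv f z‖ ≤ 2 * ‖deriv f a‖) {z : ℂ} (hz : z ∈ ball a s) :
    dist (deriv f z) (deriv f a) ≤ 3 * ‖deriv f a‖ / s * dist z a :=
  dist_le_div_mul_dist_of_mapsTo_ball (hf.analyticOnNhd isOpen_ball).deriv.differentiableOn
    (fun w hw => by
      rw [mem_closedBall, dist_eq_norm]
      linarith [norm_sub_le (deriv f w) (deriv f a), hbound w hw]) hz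

theorem ball_subset_image_of_norm_deriv_le {f : ℂ → ℂ} {a : ℂ} {s : ℝ} (hs : 0 < s)
    (hf : DifferentiableOn ℂ f (ball a s))
    (hbound : ∀ z ∈ ball a s, ‖deriv f z‖ ≤ 2 * ‖deriv f a‖) :
    ball (f a) (s * ‖deriv f a‖ / 32) ⊆ f '' ball a s := by
  set μ := ‖deriv f a‖ with hμdef
  rcases (norm_nonneg (deriv f a)).eq_or_lt with hμ | hμ
  · simp [μ, ← hμ]
  set r := s / 12
  have hrs : r < s := by simp only [r]; linarith
  have hM : ∀ w ∈ closedBall a r, ‖deriv f w - deriv f a‖ ≤ μ / 4 := fun w hw => by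
    rw [← dist_eq_norm]
    calc dist (deriv f w) (deriv f a) ≤ 3 * μ / s * dist w a :=
          dist_deriv_le_of_norm_deriv_le hf hbound (closedBall_subset_ball hrs hw)
      _ ≤ 3 * μ / s * r := by gcongr; exact mem_closedBall.mp hw
      _ = μ / 4 := by field_simp [r]; ring
  have hsphere : ∀ z ∈ sphere a r, 3 * μ * r / 4 ≤ ‖f z - f a‖ := fun z hz => by
    have h := norm_sub_sub_mul_deriv_le hrs hf hM (sphere_subset_closedBall hz)
    have := norm_sub_norm_le ((z - a) * deriv f a) (f z - f a)
    rw [mem_sphere_iff_norm] at hz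
    rw [norm_mul, hz, norm_sub_rev ((z - a) * _), ← hμdef] at this
    rw [hz] at h
    linarith
  have hnonconst : ∃ᶠ z in 𝓝 a, f z ≠ f a := fun h => by
    have hconst : f =ᶠ[𝓝 a] fun _ => f a := h.mono fun z hz => not_not.mp hz
    simp [hconst.deriv_eq] at hμ
  calc ball (f a) (s * μ / 32) = ball (f a) (3 * μ * r / 4 / 2) := by congr 1; simp only [r]; ring
    _ ⊆ f '' closedBall a r :=
      (hf.mono (closure_ball_subset_closedBall.trans (closedBall_subset_ball hrs))).diffContOnCl
        |>.ball_subset_image_closedBall (by positivity) hsphere hnonconst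
    _ ⊆ f '' ball a s := image_mono (closedBall_subset_ball hrs)

-- `a` maximises `(r / 2 - dist z z₀) * ‖f' z‖` over `closedBall z₀ (r / 2)`
theorem exists_ball_norm_deriv_le_two_mul {f : ℂ → ℂ} {z₀ : ℂ} {r : ℝ} (hr : 0 < r)
    (hf : DifferentiableOn ℂ f (ball z₀ r)) :
    ∃ a s, 0 ≤ s ∧ ball a s ⊆ ball z₀ r ∧ r / 2 * ‖deriv f z₀‖ ≤ 2 * s * ‖deriv f a‖ ∧
      ∀ z ∈ ball a s, ‖deriv f z‖ ≤ 2 * ‖deriv f a‖ := by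
  have hf' : ContinuousOn (deriv f) (closedBall z₀ (r / 2)) :=
    (hf.analyticOnNhd isOpen_ball).deriv.continuousOn.mono (closedBall_subset_ball (by linarith))
  obtain ⟨a, ha, hmax⟩ := (isCompact_closedBall z₀ (r / 2)).exists_isMaxOn
    (f := fun z => (r / 2 - dist z z₀) * ‖deriv f z‖) (nonempty_closedBall.mpr (by positivity))
    ((continuousOn_const.sub (continuous_id.dist continuous_const).continuousOn).mul hf'.norm)
  replace hmax := isMaxOn_iff.mp hmax
  have ha' := mem_closedBall.mp ha
  set s := (r / 2 - dist a z₀) / 2 with hsdef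
  have hmem : ∀ z ∈ ball a s, z ∈ closedBall z₀ (r / 2) ∧ s ≤ r / 2 - dist z z₀ := fun z hz => by
    have := dist_triangle z a z₀
    have := mem_ball.mp hz
    exact ⟨mem_closedBall.mpr (by linarith), by linarith⟩
  refine ⟨a, s, by linarith, fun z hz => ?_, ?_, fun z hz => ?_⟩
  · exact closedBall_subset_ball (by linarith) (hmem z hz).1
  · have := hmax z₀ (mem_closedBall_self (by positivity))
    rw [dist_self, sub_zero] at this
    exact this.trans_eq (by rw [hsdef]; ring)
  · have hs : 0 < s := pos_of_mem_ball hz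
    have := hmax z (hmem z hz).1
    nlinarith [(hmem z hz).2, norm_nonneg (deriv f z)]

theorem norm_deriv_le_of_forall_exists_dist_le {f : ℂ → ℂ} {z₀ : ℂ} {r d : ℝ} (hr : 0 < r)
    (hf : DifferentiableOn ℂ f (ball z₀ r))
    (hd : ∀ w, ∃ ω ∉ f '' ball z₀ r, dist ω w ≤ d) :
    ‖deriv f z₀‖ ≤ 128 * d / r := by
  obtain ⟨a, s, hs, hsub, hz₀, hbound⟩ := exists_ball_norm_deriv_le_two_mul hr hf
  obtain ⟨ω, hω, hωd⟩ := hd (f a)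
  have hsd : s * ‖deriv f a‖ ≤ 32 * d := by
    rcases hs.eq_or_lt with rfl | hs
    · linarith [dist_nonneg (x := ω) (y := f a)]
    have : ω ∉ ball (f a) (s * ‖deriv f a‖ / 32) := fun h =>
      hω (image_mono hsub (ball_subset_image_of_norm_deriv_le hs (hf.mono hsub) hbound h))
    rw [mem_ball, not_lt] at this
    linarith
  rw [le_div_iff₀ hr]
  linarith

theorem norm_deriv_le_of_cosh_sq_ne_intCast {v : ℂ → ℂ} {c : ℂ} {r : ℝ} (hr : 0 < r)
    (hv : DifferentiableOn ℂ v (ball c r)) (hvk : ∀ z ∈ ball c r, ∀ k : ℤ, cosh (v z) ^ 2 ≠ k) :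
    ‖deriv v c‖ ≤ 384 / r := by
  refine (norm_deriv_le_of_forall_exists_dist_le (d := 3) hr hv fun w => ?_).trans_eq (by ring)
  obtain ⟨ω, ⟨k, hk⟩, hω⟩ := exists_dist_le_three_cosh_sq_eq_intCast w
  exact ⟨ω, fun ⟨z, hz, hzω⟩ => hvk z hz k (hzω ▸ hk), hω⟩

theorem exists_exp_two_pi_I_mul_eq {g : ℂ → ℂ} {c : ℂ} {r : ℝ}
    (hg : DifferentiableOn ℂ g (ball c r)) (hg0 : ∀ z ∈ ball c r, g z ≠ 0)
    (hg1 : ∀ z ∈ ball c r, g z ≠ 1) (hgc : 3⁻¹ ≤ ‖g c‖) (hgc' : ‖g c‖ ≤ 3) :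
    ∃ u : ℂ → ℂ, DifferentiableOn ℂ u (ball c r) ∧ ‖u c‖ ≤ 1 ∧
      ∀ z ∈ ball c r, exp (2 * Real.pi * I * u z) = g z ∧ ∀ k : ℤ, u z ≠ k := by
  obtain ⟨L, hLd, hLc, hL⟩ := exists_log_of_ne_zero hg hg0
  have h2πI : 2 * Real.pi * I ≠ 0 := by simp [Real.pi_ne_zero]
  have hexp : ∀ z ∈ ball c r, exp (2 * Real.pi * I * (L z / (2 * Real.pi * I))) = g z :=
    fun z hz => by rw [mul_div_cancel₀ _ h2πI, hL z hz]
  refine ⟨fun z => L z / (2 * Real.pi * I), hLd.div_const _, ?_,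
    fun z hz => ⟨hexp z hz, fun k (h : L z / (2 * Real.pi * I) = k) => ?_⟩⟩
  · have hlog := norm_log_le hgc hgc'
    have hlog3 := Real.log_le_sub_one_of_pos (show (0 : ℝ) < 3 by norm_num)
    simp only [hLc, norm_div, norm_mul, norm_I, Complex.norm_real, Real.norm_eq_abs,
      abs_of_pos Real.pi_pos, Complex.norm_two, mul_one]
    rw [div_le_one (by positivity)]
    linarith [Real.pi_gt_three]
  · apply hg1 z hz
    rw [← hexp z hz, h, mul_comm]
    exact exp_int_mul_two_pi_mul_I k

theorem norm_le_of_cosh_sq_ne_intCast {v : ℂ → ℂ} {ρ : ℝ} (hρ : ρ < 1)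
    (hv : DifferentiableOn ℂ v (ball 0 1))
    (hvk : ∀ z ∈ ball (0 : ℂ) 1, ∀ k : ℤ, cosh (v z) ^ 2 ≠ k) {z : ℂ} (hz : ‖z‖ ≤ ρ) :
    ‖v z‖ ≤ ‖v 0‖ + 384 / (1 - ρ) := by
  have hρ' : 0 < 1 - ρ := sub_pos.mpr hρ
  have hsub : closedBall (0 : ℂ) ρ ⊆ ball 0 1 := closedBall_subset_ball hρ
  have hv' : ∀ w ∈ closedBall (0 : ℂ) ρ, ‖deriv v w‖ ≤ 384 / (1 - ρ) := fun w hw => by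
    have hball : ball w (1 - ρ) ⊆ ball 0 1 := fun y hy => by
      rw [mem_ball_iff_norm] at hy
      rw [mem_ball_zero_iff]
      linarith [norm_le_norm_add_norm_sub' y w, mem_closedBall_zero_iff.mp hw]
    exact norm_deriv_le_of_cosh_sq_ne_intCast hρ' (hv.mono hball)
      fun y hy => hvk y (hball hy)
  have := (convex_closedBall (0 : ℂ) ρ).norm_image_sub_le_of_norm_deriv_le
    (fun w hw => hv.differentiableAt (isOpen_ball.mem_nhds (hsub hw))) hv'
    (mem_closedBall_self ((norm_nonneg z).trans hz)) (mem_closedBall_zero_iff.mpr hz)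
  rw [sub_zero] at this
  have : 384 / (1 - ρ) * ‖z‖ ≤ 384 / (1 - ρ) :=
    mul_le_of_le_one_right (by positivity) (hz.trans hρ.le)
  linarith [norm_le_norm_add_norm_sub' (v z) (v 0)]

theorem exists_norm_le_of_ne_zero_of_ne_one {ρ : ℝ} (hρ : ρ < 1) :
    ∃ S > 0, ∀ g : ℂ → ℂ, DifferentiableOn ℂ g (ball 0 1) → (∀ z ∈ ball 0 1, g z ≠ 0) →
      (∀ z ∈ ball 0 1, g z ≠ 1) → 3⁻¹ ≤ ‖g 0‖ → ‖g 0‖ ≤ 3 → ∀ z, ‖z‖ ≤ ρ → ‖g z‖ ≤ S := by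
  set V := Real.log 3 + Real.pi + 384 / (1 - ρ)
  refine ⟨Real.exp (2 * Real.pi * Real.exp V ^ 2), Real.exp_pos _,
    fun g hg hg0 hg1 hg₀ hg₀' z hz => ?_⟩
  have hz1 : z ∈ ball (0 : ℂ) 1 := mem_ball_zero_iff.mpr (hz.trans_lt hρ)
  obtain ⟨u, hud, hu0, hu⟩ := exists_exp_two_pi_I_mul_eq hg hg0 hg1 hg₀ hg₀'
  obtain ⟨v, hvd, hv0, hv⟩ := exists_cosh_sq_eq one_pos hud
    (fun z hz => by exact_mod_cast (hu z hz).2 0) (fun z hz => by exact_mod_cast (hu z hz).2 1) hu0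
  have hvz := norm_le_of_cosh_sq_ne_intCast hρ hvd (fun y hy => hv y hy ▸ (hu y hy).2) hz
  calc ‖g z‖ = ‖exp (2 * Real.pi * I * cosh (v z) ^ 2)‖ := by rw [hv z hz1, (hu z hz1).1]
    _ ≤ Real.exp (2 * Real.pi * ‖cosh (v z)‖ ^ 2) := by
      refine (norm_exp_le_exp_norm _).trans_eq ?_
      simp [abs_of_pos Real.pi_pos]
    _ ≤ Real.exp (2 * Real.pi * Real.exp V ^ 2) := by
      gcongr
      exact (norm_cosh_le_exp_norm _).trans (Real.exp_le_exp.mpr (by linarith))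

theorem exists_norm_le_mul_of_notMem_image {ρ : ℝ} (hρ : ρ < 1) :
    ∃ S > 0, ∀ h : ℂ → ℂ, DifferentiableOn ℂ h (ball 0 1) → h 0 = 0 → ∀ ω₁ ω₂ : ℂ,
      ‖ω₂‖ = 2 * ‖ω₁‖ → ω₁ ∉ h '' ball 0 1 → ω₂ ∉ h '' ball 0 1 →
      ∀ z, ‖z‖ ≤ ρ → ‖h z‖ ≤ ‖ω₁‖ * S := by
  obtain ⟨S, hS, hg⟩ := exists_norm_le_of_ne_zero_of_ne_one hρ
  refine ⟨1 + 3 * S, by positivity, fun h hh h0 ω₁ ω₂ hω hω₁ hω₂ z hz => ?_⟩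
  have h0mem : (0 : ℂ) ∈ ball 0 1 := mem_ball_self one_pos
  have hω₁0 : 0 < ‖ω₁‖ := norm_pos_iff.mpr fun h' => hω₁ ⟨0, h0mem, h0.trans h'.symm⟩
  set d := ω₂ - ω₁
  have hd : ‖ω₁‖ ≤ ‖d‖ := by linarith [norm_sub_norm_le ω₂ ω₁]
  have hd' : ‖d‖ ≤ 3 * ‖ω₁‖ := by linarith [norm_sub_le ω₂ ω₁]
  have hd0 : d ≠ 0 := norm_pos_iff.mp (hω₁0.trans_le hd)
  have hG0 : ‖(h 0 - ω₁) / d‖ = ‖ω₁‖ / ‖d‖ := by rw [h0, zero_sub, norm_div, norm_neg]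
  have hG := hg (fun z => (h z - ω₁) / d) ((hh.sub_const ω₁).div_const d)
    (fun z hz h' => hω₁ ⟨z, hz, by simpa [sub_eq_zero, hd0] using h'⟩)
    (fun z hz h' => hω₂ ⟨z, hz, by rw [div_eq_one_iff_eq hd0] at h'; simpa [d] using h'⟩)
    ?_ ?_ z hz
  · rw [norm_div] at hG
    calc ‖h z‖ ≤ ‖ω₁‖ + ‖h z - ω₁‖ := norm_le_norm_add_norm_sub' _ _
      _ = ‖ω₁‖ + ‖d‖ * (‖h z - ω₁‖ / ‖d‖) := by rw [mul_div_cancel₀ _ (norm_ne_zero_iff.mpr hd0)]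
      _ ≤ ‖ω₁‖ + 3 * ‖ω₁‖ * S := by gcongr
      _ = ‖ω₁‖ * (1 + 3 * S) := by ring
  · rw [hG0, inv_le_iff_one_le_mul₀ (by norm_num), div_mul_eq_mul_div,
      le_div_iff₀ (hω₁0.trans_le hd)]
    linarith
  · rw [hG0, div_le_iff₀ (hω₁0.trans_le hd)]
    nlinarith

theorem stmt_7_general (ρ : ℝ) (hρ1 : ρ < 1) :
    ∃ c > 0, ∀ h : ℂ → ℂ, DifferentiableOn ℂ h (Metric.ball 0 1) → h 0 = 0 →
      (∃ z : ℂ, ‖z‖ = ρ ∧ 1 ≤ ‖h z‖) →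
      ∃ R ≥ c, Metric.sphere (0 : ℂ) R ⊆ h '' Metric.ball 0 1 := by
  obtain ⟨S, hS, hbound⟩ := exists_norm_le_mul_of_notMem_image hρ1
  set c := 1 / (2 * S)
  have hc : 0 < c := by positivity
  refine ⟨c, hc, fun h hh h0 ⟨z, hz, hhz⟩ => ?_⟩
  by_contra! hcover
  obtain ⟨ω₁, hω₁, hω₁'⟩ := not_subset.mp (hcover c le_rfl)
  obtain ⟨ω₂, hω₂, hω₂'⟩ := not_subset.mp (hcover (2 * c) (by linarith))
  rw [mem_sphere_zero_iff_norm] at hω₁ hω₂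
  have := hbound h hh h0 ω₁ ω₂ (by rw [hω₁, hω₂]) hω₁' hω₂' z hz.le
  rw [hω₁, show c * S = 1 / 2 by simp only [c]; field_simp] at this
  linarith

/-- Bohr's covering lemma: for every `ρ ∈ (0,1)` there is `c > 0` such that every
holomorphic `h` on the unit disc with `h(0) = 0` and `max_{|z|=ρ} |h(z)| ≥ 1`
covers some full circle `{|w| = R}` with `R ≥ c`. -/
theorem stmt_7 (ρ : ℝ) (hρ : 0 < ρ) (hρ1 : ρ < 1) :
    ∃ c > 0, ∀ h : ℂ → ℂ, DifferentiableOn ℂ h (Metric.ball 0 1) → h 0 = 0 →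
      (∃ z : ℂ, ‖z‖ = ρ ∧ 1 ≤ ‖h z‖) →
      ∃ R ≥ c, Metric.sphere (0 : ℂ) R ⊆ h '' Metric.ball 0 1 :=
  stmt_7_general ρ hρ1
end

section
/- Let f : ℂ → ℂ be entire and non-constant, and let G ⊂ ℂ be a bounded domain. Then f(T(G)) ⊆ T(f(G)) and ∂T(f(G)) ⊆ f(∂T(G)), where T(G) denotes the topological hull of G (the union of G with the bounded connected components of its complement). -/
/-!
A nonconstant entire function is an open map. If `z` lies in a bounded component of `ℂ \ G`,
then, since components of a compact Hausdorff space are intersections of clopen sets, there is a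
bounded open `O ∋ z` with `∂O ⊆ G`. The component of `f z` in `ℂ \ f(G)` avoids
`f(∂O) ⊇ ∂f(O)`, so it stays inside the bounded set `f(O)`; hence `f(T(G)) ⊆ T(f(G))`.

Since `f(G)` is bounded, `ℂ \ T(f(G))` is the single unbounded component of the closed set
`ℂ \ f(G)`, so `T(f(G))` is open. A boundary point `p` of `T(f(G))` thus lies outside `T(f(G))`
but in `closure (f(G)) = f(closure G)`, and by the first inclusion a preimage `x ∈ closure G` of `p`
lies outside `T(G)`, i.e. on `∂T(G)`.
-/

/-- The topological hull `T(G)` of a set `G ⊆ ℂ`: the complement of the union of the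
unbounded connected components of `ℂ \ G`; i.e. `G` together with the bounded
connected components of its complement. -/
def topHull (G : Set ℂ) : Set ℂ :=
  (⋃ w ∈ {w : ℂ | w ∉ G ∧ ¬ Bornology.IsBounded (connectedComponentIn Gᶜ w)},
    connectedComponentIn Gᶜ w)ᶜ

open Set Metric Bornology

theorem exists_isClopen_of_connectedComponent_subset {X : Type*} [TopologicalSpace X]
    [T2Space X] [CompactSpace X] {x : X} {U : Set X} (hU : IsOpen U)
    (h : connectedComponent x ⊆ U) : ∃ V, IsClopen V ∧ x ∈ V ∧ V ⊆ U := by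
  have : Nonempty {V : Set X // IsClopen V ∧ x ∈ V} := ⟨⟨univ, isClopen_univ, mem_univ x⟩⟩
  obtain ⟨⟨V, hV, hxV⟩, hVU⟩ := exists_subset_nhds_of_compactSpace
    (V := fun V : {V : Set X // IsClopen V ∧ x ∈ V} => V.1)
    (fun V W => ⟨⟨V.1 ∩ W.1, V.2.1.inter W.2.1, V.2.2, W.2.2⟩,
      inter_subset_left, inter_subset_right⟩)
    (fun V => V.2.1.isClosed)
    (fun y hy => hU.mem_nhds (h (connectedComponent_eq_iInter_isClopen x ▸ hy)))
  exact ⟨V, hV, hxV, hVU⟩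

theorem IsCompact.exists_isClosed_of_connectedComponentIn_subset {X : Type*}
    [TopologicalSpace X] [T2Space X] {K U : Set X} (hK : IsCompact K) (hU : IsOpen U) {x : X}
    (hx : x ∈ K) (h : connectedComponentIn K x ⊆ U) :
    ∃ E, IsClosed E ∧ IsClosed (K \ E) ∧ x ∈ E ∧ E ⊆ K ∩ U := by
  have : CompactSpace K := isCompact_iff_compactSpace.mp hK
  rw [connectedComponentIn_eq_image hx, image_subset_iff] at h
  obtain ⟨V, hV, hxV, hVU⟩ :=
    exists_isClopen_of_connectedComponent_subset (hU.preimage continuous_subtype_val) h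
  have hcl : ∀ W : Set K, IsClosed W → IsClosed ((↑) '' W : Set X) := fun W hW =>
    (hW.isCompact.image continuous_subtype_val).isClosed
  refine ⟨(↑) '' V, hcl V hV.isClosed, ?_, ⟨⟨x, hx⟩, hxV, rfl⟩, ?_⟩
  · convert hcl Vᶜ hV.compl.isClosed using 1
    ext y
    simp
  · rintro _ ⟨y, hy, rfl⟩
    exact ⟨y.2, hVU hy⟩

theorem exists_isOpen_isBounded_frontier_subset {X : Type*} [MetricSpace X] [ProperSpace X]
    {G : Set X} (hG : IsOpen G) {z : X} (hz : z ∉ G)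
    (hb : IsBounded (connectedComponentIn Gᶜ z)) :
    ∃ O, IsOpen O ∧ IsBounded O ∧ z ∈ O ∧ frontier O ⊆ G := by
  obtain ⟨r, hr⟩ := (isBounded_iff_subset_ball z).mp hb
  set K := Gᶜ ∩ closedBall z r
  have hzK : z ∈ K := ⟨hz, ball_subset_closedBall (hr (mem_connectedComponentIn hz))⟩
  have hKc : IsCompact K := (isCompact_closedBall z r).inter_left hG.isClosed_compl
  obtain ⟨E, hE, hKE, hzE, hEK⟩ := hKc.exists_isClosed_of_connectedComponentIn_subset
    isOpen_ball hzK ((connectedComponentIn_mono z inter_subset_left).trans hr)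
  -- `O := U ∩ ball z r` for an open `U ⊇ E` whose closure misses `K \ E`: a point of `∂O` outside
  -- `G` would lie in `K`, but neither in `E ⊆ O` nor in `K \ E`.
  obtain ⟨U, V, hU, hV, hEU, hKEV, hUV⟩ := normal_separation hE hKE disjoint_sdiff_right
  have hO : IsOpen (U ∩ ball z r) := hU.inter isOpen_ball
  refine ⟨U ∩ ball z r, hO, isBounded_ball.subset inter_subset_right,
    ⟨hEU hzE, (hEK hzE).2⟩, ?_⟩
  rw [hO.frontier_eq]
  rintro w ⟨hwcl, hwO⟩
  by_contra hwG
  have hwU : w ∈ closure U := closure_mono inter_subset_left hwcl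
  have hwK : w ∈ K := ⟨hwG, closure_ball_subset_closedBall (closure_mono inter_subset_right hwcl)⟩
  by_cases hwE : w ∈ E
  · exact hwO ⟨hEU hwE, (hEK hwE).2⟩
  · obtain ⟨y, hyV, hyU⟩ := mem_closure_iff.mp hwU V hV (hKEV ⟨hwK, hwE⟩)
    exact disjoint_left.mp hUV hyU hyV

theorem isBounded_connectedComponentIn_compl_image {X Y : Type*} [MetricSpace X] [ProperSpace X]
    [MetricSpace Y] {f : X → Y} (hfc : Continuous f) (hfo : IsOpenMap f) {G O : Set X}
    (hO : IsOpen O) (hOb : IsBounded O) (hOG : frontier O ⊆ G) {z : X} (hz : z ∈ O)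
    (hfz : f z ∉ f '' G) : IsBounded (connectedComponentIn (f '' G)ᶜ (f z)) := by
  have hcpt : IsCompact (f '' closure O) := hOb.isCompact_closure.image hfc
  -- The component avoids `f '' frontier O`, which contains the frontier of the open set `f '' O`.
  have hsplit : connectedComponentIn (f '' G)ᶜ (f z) ⊆ f '' O ∪ (f '' closure O)ᶜ := by
    intro c hc
    by_cases hcO : c ∈ f '' closure O
    · obtain ⟨x, hx, rfl⟩ := hcO
      rcases closure_eq_self_union_frontier O ▸ hx with hx | hx
      · exact Or.inl (mem_image_of_mem f hx)
      · exact absurd (mem_image_of_mem f (hOG hx)) (connectedComponentIn_subset _ _ hc)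
    · exact Or.inr hcO
  have hsub := isPreconnected_connectedComponentIn.subset_left_of_subset_union (hfo O hO)
    hcpt.isClosed.isOpen_compl (disjoint_compl_right.mono_left (image_mono subset_closure)) hsplit
    ⟨f z, mem_connectedComponentIn hfz, mem_image_of_mem f hz⟩
  exact hcpt.isBounded.subset (hsub.trans (image_mono subset_closure))

theorem notMem_topHull_iff {G : Set ℂ} {z : ℂ} :
    z ∉ topHull G ↔ z ∉ G ∧ ¬ IsBounded (connectedComponentIn Gᶜ z) := by
  simp only [topHull, mem_compl_iff, not_not, mem_iUnion₂, mem_ofPred_eq]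
  constructor
  · rintro ⟨w, ⟨-, hw⟩, hzw⟩
    exact ⟨connectedComponentIn_subset _ _ hzw, connectedComponentIn_eq hzw ▸ hw⟩
  · rintro ⟨hz, hzb⟩
    exact ⟨z, ⟨hz, hzb⟩, mem_connectedComponentIn hz⟩

theorem mem_topHull_iff {G : Set ℂ} {z : ℂ} :
    z ∈ topHull G ↔ z ∈ G ∨ IsBounded (connectedComponentIn Gᶜ z) := by
  rw [← not_iff_not, notMem_topHull_iff, not_or]

theorem subset_topHull (G : Set ℂ) : G ⊆ topHull G :=
  fun _ hz => mem_topHull_iff.mpr (Or.inl hz)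

theorem Complex.isPreconnected_setOf_lt_norm {r : ℝ} (hr : 0 < r) :
    IsPreconnected {v : ℂ | r < ‖v‖} := by
  have : {v : ℂ | r < ‖v‖} = Complex.exp '' {c : ℂ | Real.log r < c.re} := by
    ext v
    constructor
    · intro hv
      have hv0 : v ≠ 0 := norm_pos_iff.mp (hr.trans hv)
      refine ⟨Complex.log v, ?_, Complex.exp_log hv0⟩
      rw [mem_ofPred_eq, Complex.log_re]
      exact Real.log_lt_log hr hv
    · rintro ⟨c, hc, rfl⟩
      rw [mem_ofPred_eq, Complex.norm_exp, ← Real.exp_log hr]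
      exact Real.exp_lt_exp.mpr hc
  rw [this]
  exact (convex_halfSpace_re_gt _).isPreconnected.image _ Complex.continuous_exp.continuousOn

theorem isClosed_connectedComponentIn {X : Type*} [TopologicalSpace X] {F : Set X}
    (hF : IsClosed F) (x : X) : IsClosed (connectedComponentIn F x) := by
  by_cases hx : x ∈ F
  · refine isClosed_of_closure_subset ?_
    exact isPreconnected_connectedComponentIn.closure.subset_connectedComponentIn
      (subset_closure (mem_connectedComponentIn hx))
      (hF.closure_subset_iff.mpr (connectedComponentIn_subset F x))
  · rw [connectedComponentIn_eq_empty hx]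
    exact isClosed_empty

theorem compl_topHull_eq_connectedComponentIn {H : Set ℂ} {r : ℝ} (hr : 0 < r)
    (hH : H ⊆ closedBall 0 r) {v : ℂ} (hv : r < ‖v‖) :
    (topHull H)ᶜ = connectedComponentIn Hᶜ v := by
  -- Every unbounded component of `Hᶜ` contains the connected exterior region `Ext`.
  set Ext := {v : ℂ | r < ‖v‖}
  have hExt : Ext ⊆ Hᶜ := fun w hw hwH => (mem_closedBall_zero_iff.mp (hH hwH)).not_gt hw
  have hExt_sub : ∀ w ∈ Ext, Ext ⊆ connectedComponentIn Hᶜ w := fun w hw =>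
    (Complex.isPreconnected_setOf_lt_norm hr).subset_connectedComponentIn hw hExt
  have hExt_unbdd : ¬ IsBounded Ext := fun hb =>
    NormedSpace.unbounded_univ ℝ ℂ <| (isBounded_closedBall.union hb).subset fun w _ =>
      (le_or_gt ‖w‖ r).imp mem_closedBall_zero_iff.mpr id
  ext z
  rw [mem_compl_iff, notMem_topHull_iff]
  constructor
  · rintro ⟨hz, hzb⟩
    obtain ⟨w, hwz, hwr⟩ := not_subset.mp fun h : _ ⊆ closedBall (0 : ℂ) r =>
      hzb (isBounded_closedBall.subset h)
    have hvz : v ∈ connectedComponentIn Hᶜ z :=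
      connectedComponentIn_eq hwz ▸ hExt_sub w (not_le.mp (mt mem_closedBall_zero_iff.mpr hwr)) hv
    rw [← connectedComponentIn_eq hvz]
    exact mem_connectedComponentIn hz
  · intro hz
    refine ⟨connectedComponentIn_subset _ _ hz, ?_⟩
    rw [← connectedComponentIn_eq hz]
    exact fun hb => hExt_unbdd (hb.subset (hExt_sub v hv))

theorem isOpen_topHull {H : Set ℂ} (hHo : IsOpen H) (hHb : IsBounded H) : IsOpen (topHull H) := by
  obtain ⟨r, hr, hHr⟩ := hHb.subset_closedBall_lt 0 0
  have hv : r < ‖((r + 1 : ℝ) : ℂ)‖ := by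
    rw [Complex.norm_real, Real.norm_of_nonneg (by positivity)]
    linarith
  rw [← isClosed_compl_iff, compl_topHull_eq_connectedComponentIn hr hHr hv]
  exact isClosed_connectedComponentIn hHo.isClosed_compl _

theorem isOpen_compl_topHull_diff_closure (H : Set ℂ) : IsOpen ((topHull H)ᶜ \ closure H) := by
  refine Metric.isOpen_iff.mpr fun p ⟨hpT, hpH⟩ => ?_
  obtain ⟨ε, hε, hball⟩ := Metric.isOpen_iff.mp isClosed_closure.isOpen_compl p hpH
  have hballH : ball p ε ⊆ Hᶜ := fun b hb hbH => hball hb (subset_closure hbH)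
  have hball_cc : ball p ε ⊆ connectedComponentIn Hᶜ p :=
    isPreconnected_ball.subset_connectedComponentIn (mem_ball_self hε) hballH
  refine ⟨ε, hε, fun b hb => ⟨?_, hball hb⟩⟩
  rw [mem_compl_iff, notMem_topHull_iff] at hpT ⊢
  exact ⟨hballH hb, connectedComponentIn_eq (hball_cc hb) ▸ hpT.2⟩

theorem closure_topHull_subset (H : Set ℂ) : closure (topHull H) ⊆ topHull H ∪ closure H := by
  refine closure_minimal subset_union_left ?_
  rw [← isOpen_compl_iff, compl_union]
  exact isOpen_compl_topHull_diff_closure H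

theorem image_topHull_subset {f : ℂ → ℂ} (hfc : Continuous f) (hfo : IsOpenMap f) {G : Set ℂ}
    (hG : IsOpen G) : f '' topHull G ⊆ topHull (f '' G) := by
  rintro _ ⟨z, hz, rfl⟩
  rw [mem_topHull_iff] at hz ⊢
  by_cases hfz : f z ∈ f '' G
  · exact Or.inl hfz
  have hzG : z ∉ G := fun h => hfz (mem_image_of_mem f h)
  obtain ⟨O, hO, hOb, hzO, hOG⟩ :=
    exists_isOpen_isBounded_frontier_subset hG hzG (hz.resolve_left hzG)
  exact Or.inr (isBounded_connectedComponentIn_compl_image hfc hfo hO hOb hOG hzO hfz)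

theorem frontier_topHull_image_subset {f : ℂ → ℂ} (hfc : Continuous f) {G : Set ℂ}
    (hGb : IsBounded G) (hfG : f '' topHull G ⊆ topHull (f '' G))
    (hT : IsOpen (topHull (f '' G))) : frontier (topHull (f '' G)) ⊆ f '' frontier (topHull G) := by
  rw [hT.frontier_eq]
  rintro p ⟨hpcl, hpT⟩
  have hp : p ∈ closure (f '' G) := (closure_topHull_subset _ hpcl).resolve_left hpT
  rw [← image_closure_of_isCompact hGb.isCompact_closure hfc.continuousOn] at hp
  obtain ⟨x, hx, rfl⟩ := hp
  exact ⟨x, ⟨closure_mono (subset_topHull G) hx,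
    fun hxT => hpT (hfG (mem_image_of_mem f (interior_subset hxT)))⟩, rfl⟩

theorem stmt_8_general (f : ℂ → ℂ) (hf : Differentiable ℂ f)
    (hnc : ¬ ∃ c : ℂ, f = Function.const ℂ c)
    (G : Set ℂ) (hGo : IsOpen G) (hGb : Bornology.IsBounded G) :
    f '' topHull G ⊆ topHull (f '' G) ∧
    frontier (topHull (f '' G)) ⊆ f '' frontier (topHull G) := by
  have hfo : IsOpenMap f :=
    ((Complex.analyticOnNhd_univ_iff_differentiable.mpr hf).is_constant_or_isOpenMap).resolve_left
      fun ⟨c, hc⟩ => hnc ⟨c, funext hc⟩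
  have hfG := image_topHull_subset hf.continuous hfo hGo
  have hfGb : IsBounded (f '' G) := (hGb.isCompact_closure.image hf.continuous).isBounded.subset
    (image_mono subset_closure)
  exact ⟨hfG, frontier_topHull_image_subset hf.continuous hGb hfG (isOpen_topHull (hfo G hGo) hfGb)⟩

/-- If `f` is a non-constant entire function and `G` a bounded domain, then
`f(T(G)) ⊆ T(f(G))` and `∂T(f(G)) ⊆ f(∂T(G))`. -/
theorem stmt_8 (f : ℂ → ℂ) (hf : Differentiable ℂ f)
    (hnc : ¬ ∃ c : ℂ, f = Function.const ℂ c)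
    (G : Set ℂ) (hGo : IsOpen G) (hGc : IsConnected G) (hGb : Bornology.IsBounded G) :
    f '' topHull G ⊆ topHull (f '' G) ∧
    frontier (topHull (f '' G)) ⊆ f '' frontier (topHull G) :=
  stmt_8_general f hf hnc G hGo hGb
end

section
/- (McMullen density lemma, measure version) Let (𝓔_k)_{k≥1} be collections of pairwise disjoint compact subsets of ℝⁿ such that every element of 𝓔_{k+1} is contained in a unique element of 𝓔_k and every element of 𝓔_k contains at least one element of 𝓔_{k+1}. Let E_k be the union of the elements of 𝓔_k and E = ⋂_k E_k. If there are Δ_k ∈ (0,1] with dens(E_{k+1}, A) ≥ Δ_k for every A ∈ 𝓔_k, and ∏_{k=1}^∞ Δ_k > 0, then E has positive Lebesgue measure. -/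
/-!
Restricting Lebesgue measure to one piece `A₀ ∈ 𝓔 0` makes it finite, and every piece of every
generation then lies inside `A₀` or misses it, so the density hypothesis holds for the restricted
measure as well. Summing it over the disjoint pieces of generation `k` gives
`μ E_{k+1} ≥ Δ_k μ E_k`, hence `μ E_k ≥ (∏_{j<k} Δ_j) μ E_0 ≥ p μ A₀`, and continuity from above
passes this bound to `E = ⋂ₖ E_k`.
-/

open MeasureTheory Set Finset
open scoped ENNReal

namespace McMullen

theorem subset_or_disjoint_of_mem_zero {α : Type*} {𝓔 : ℕ → Set (Set α)} {A₀ : Set α}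
    (hA₀ : A₀ ∈ 𝓔 0) (hdisj : (𝓔 0).Pairwise Disjoint)
    (hnest : ∀ k, ∀ B ∈ 𝓔 (k + 1), ∃ A ∈ 𝓔 k, B ⊆ A) :
    ∀ k, ∀ B ∈ 𝓔 k, B ⊆ A₀ ∨ Disjoint B A₀
  | 0, B, hB => (eq_or_ne B A₀).imp le_of_eq (hdisj hB hA₀)
  | k + 1, B, hB => by
    obtain ⟨A, hA, hBA⟩ := hnest k B hB
    exact (subset_or_disjoint_of_mem_zero hA₀ hdisj hnest k A hA).imp hBA.trans
      (Disjoint.mono_left hBA)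

variable {α : Type*} [MeasurableSpace α] {μ : Measure α}

theorem countable_of_pairwise_disjoint_of_measure_pos [SFinite μ] {𝓐 : Set (Set α)}
    (hdisj : 𝓐.Pairwise Disjoint) (hmeas : ∀ A ∈ 𝓐, MeasurableSet A)
    (hpos : ∀ A ∈ 𝓐, 0 < μ A) : 𝓐.Countable := by
  have hcount := Measure.countable_meas_pos_of_disjoint_iUnion (μ := μ)
    (As := fun A : 𝓐 ↦ (A : Set α)) (fun A ↦ hmeas A A.2)
    (fun A B hAB ↦ hdisj A.2 B.2 (Subtype.coe_ne_coe.mpr hAB))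
  have : Countable 𝓐 := countable_univ_iff.mp (hcount.mono fun A _ ↦ hpos A A.2)
  exact countable_coe_iff.mp this

theorem mul_measure_sUnion_le_measure_inter_sUnion {𝓐 : Set (Set α)} {S : Set α} {c : ℝ≥0∞}
    (hcount : 𝓐.Countable) (hdisj : 𝓐.Pairwise Disjoint) (hmeas : ∀ A ∈ 𝓐, MeasurableSet A)
    (hS : MeasurableSet S) (hdens : ∀ A ∈ 𝓐, c * μ A ≤ μ (S ∩ A)) :
    c * μ (⋃₀ 𝓐) ≤ μ (S ∩ ⋃₀ 𝓐) := by
  have hdisjS : 𝓐.PairwiseDisjoint (S ∩ ·) := fun A hA B hB hAB ↦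
    (hdisj hA hB hAB).mono inter_subset_right inter_subset_right
  calc c * μ (⋃₀ 𝓐) = ∑' A : 𝓐, c * μ A := by
        rw [measure_sUnion hcount hdisj hmeas, ENNReal.tsum_mul_left]
    _ ≤ ∑' A : 𝓐, μ (S ∩ A) := ENNReal.tsum_le_tsum fun A ↦ hdens A A.2
    _ = μ (S ∩ ⋃₀ 𝓐) := by
        rw [sUnion_eq_biUnion, inter_iUnion₂,
          measure_biUnion hcount hdisjS fun A hA ↦ hS.inter (hmeas A hA)]

section Generations

variable {𝓔 : ℕ → Set (Set α)} {c : ℕ → ℝ≥0∞}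

theorem prod_mul_measure_sUnion_zero_le (hcount : ∀ k, (𝓔 k).Countable)
    (hdisj : ∀ k, (𝓔 k).Pairwise Disjoint) (hmeas : ∀ k, ∀ A ∈ 𝓔 k, MeasurableSet A)
    (hanti : Antitone fun k ↦ ⋃₀ 𝓔 k)
    (hdens : ∀ k, ∀ A ∈ 𝓔 k, c k * μ A ≤ μ (⋃₀ 𝓔 (k + 1) ∩ A)) (k : ℕ) :
    (∏ j ∈ range k, c j) * μ (⋃₀ 𝓔 0) ≤ μ (⋃₀ 𝓔 k) := by
  induction k with
  | zero => simp
  | succ k ih =>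
    calc (∏ j ∈ range (k + 1), c j) * μ (⋃₀ 𝓔 0)
        = c k * ((∏ j ∈ range k, c j) * μ (⋃₀ 𝓔 0)) := by rw [prod_range_succ]; ring
      _ ≤ c k * μ (⋃₀ 𝓔 k) := by gcongr
      _ ≤ μ (⋃₀ 𝓔 (k + 1) ∩ ⋃₀ 𝓔 k) :=
          mul_measure_sUnion_le_measure_inter_sUnion (hcount k) (hdisj k) (hmeas k)
            (.sUnion (hcount _) (hmeas _)) (hdens k)
      _ = μ (⋃₀ 𝓔 (k + 1)) := by rw [inter_eq_left.mpr (hanti k.le_succ)]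

theorem mul_measure_sUnion_zero_le_measure_iInter {p : ℝ≥0∞} (hcount : ∀ k, (𝓔 k).Countable)
    (hdisj : ∀ k, (𝓔 k).Pairwise Disjoint) (hmeas : ∀ k, ∀ A ∈ 𝓔 k, MeasurableSet A)
    (hanti : Antitone fun k ↦ ⋃₀ 𝓔 k)
    (hdens : ∀ k, ∀ A ∈ 𝓔 k, c k * μ A ≤ μ (⋃₀ 𝓔 (k + 1) ∩ A))
    (hfin : μ (⋃₀ 𝓔 0) ≠ ∞) (hp : ∀ N, p ≤ ∏ j ∈ range N, c j) :
    p * μ (⋃₀ 𝓔 0) ≤ μ (⋂ k, ⋃₀ 𝓔 k) := by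
  rw [hanti.measure_iInter
    (fun k ↦ (MeasurableSet.sUnion (hcount k) (hmeas k)).nullMeasurableSet) ⟨0, hfin⟩]
  exact le_iInf fun k ↦ (mul_le_mul_left (hp k) _).trans
    (prod_mul_measure_sUnion_zero_le hcount hdisj hmeas hanti hdens k)

end Generations

end McMullen

open McMullen

theorem stmt_15_general (n : ℕ) (𝓔 : ℕ → Set (Set (Fin n → ℝ))) (Δ : ℕ → ℝ)
    (hΔ : ∀ k, 0 < Δ k ∧ Δ k ≤ 1)
    (hne : (𝓔 0).Nonempty)
    (hcpt : ∀ k, ∀ A ∈ 𝓔 k, IsCompact A)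
    (hdisj : ∀ k, ∀ A ∈ 𝓔 k, ∀ B ∈ 𝓔 k, A ≠ B → Disjoint A B)
    (hnest : ∀ k, ∀ B ∈ 𝓔 (k + 1), ∃! A, A ∈ 𝓔 k ∧ B ⊆ A)
    (hpos : ∀ k, ∀ A ∈ 𝓔 k, 0 < volume A)
    (hdens : ∀ k, ∀ A ∈ 𝓔 k,
      ENNReal.ofReal (Δ k) * volume A ≤ volume (⋃₀ 𝓔 (k + 1) ∩ A))
    (hprod : ∃ p > (0 : ℝ), ∀ N : ℕ, p ≤ ∏ k ∈ Finset.range N, Δ k) :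
    0 < volume (⋂ k, ⋃₀ 𝓔 k) := by
  obtain ⟨A₀, hA₀⟩ := hne
  obtain ⟨p, hp, hpprod⟩ := hprod
  have hpair k : (𝓔 k).Pairwise Disjoint := fun A hA B hB ↦ hdisj k A hA B hB
  have hmeas k A (hA : A ∈ 𝓔 k) : MeasurableSet A := (hcpt k A hA).measurableSet
  have hnest' k B (hB : B ∈ 𝓔 (k + 1)) : ∃ A ∈ 𝓔 k, B ⊆ A := (hnest k B hB).exists
  have hanti : Antitone fun k ↦ ⋃₀ 𝓔 k := antitone_nat_of_succ_le fun k ↦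
    sUnion_subset fun B hB ↦
      (hnest' k B hB).elim fun A hA ↦ hA.2.trans (subset_sUnion_of_mem hA.1)
  set μ := volume.restrict A₀
  have : IsFiniteMeasure μ := isFiniteMeasure_restrict.mpr (hcpt 0 A₀ hA₀).measure_ne_top
  have hdensμ k A (hA : A ∈ 𝓔 k) : ENNReal.ofReal (Δ k) * μ A ≤ μ (⋃₀ 𝓔 (k + 1) ∩ A) := by
    rcases subset_or_disjoint_of_mem_zero hA₀ (hpair 0) hnest' k A hA with hsub | hdisj₀
    · rw [Measure.restrict_eq_self _ hsub,
        Measure.restrict_eq_self _ (inter_subset_right.trans hsub)]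
      exact hdens k A hA
    · simp [μ, Measure.restrict_apply (hmeas k A hA), hdisj₀.inter_eq]
  have hbound := mul_measure_sUnion_zero_le_measure_iInter (μ := μ) (p := ENNReal.ofReal p)
    (fun k ↦ countable_of_pairwise_disjoint_of_measure_pos (hpair k) (hmeas k) (hpos k))
    hpair hmeas hanti hdensμ (measure_ne_top _ _) fun N ↦ by
      rw [← ENNReal.ofReal_prod_of_nonneg fun j _ ↦ (hΔ j).1.le]
      exact ENNReal.ofReal_le_ofReal (hpprod N)
  rw [Measure.restrict_apply_superset (subset_sUnion_of_mem hA₀)] at hbound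
  calc 0 < ENNReal.ofReal p * volume A₀ :=
        ENNReal.mul_pos (ENNReal.ofReal_pos.mpr hp).ne' (hpos 0 A₀ hA₀).ne'
    _ ≤ μ (⋂ k, ⋃₀ 𝓔 k) := hbound
    _ ≤ volume (⋂ k, ⋃₀ 𝓔 k) := Measure.restrict_apply_le _ _

/-- McMullen's density lemma (measure version): if `𝓔 k` are collections of pairwise
disjoint compact subsets of `ℝⁿ`, each element of `𝓔 (k+1)` lies in a unique element
of `𝓔 k`, each element of `𝓔 k` contains an element of `𝓔 (k+1)`, the density of
`E_{k+1} = ⋃₀ 𝓔 (k+1)` in each `A ∈ 𝓔 k` is at least `Δ k`, and `∏ Δ k > 0`, then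
`E = ⋂ₖ ⋃₀ 𝓔 k` has positive Lebesgue measure. -/
theorem stmt_15 (n : ℕ) (𝓔 : ℕ → Set (Set (Fin n → ℝ))) (Δ : ℕ → ℝ)
    (hΔ : ∀ k, 0 < Δ k ∧ Δ k ≤ 1)
    (hne : (𝓔 0).Nonempty)
    (hcpt : ∀ k, ∀ A ∈ 𝓔 k, IsCompact A)
    (hdisj : ∀ k, ∀ A ∈ 𝓔 k, ∀ B ∈ 𝓔 k, A ≠ B → Disjoint A B)
    (hnest : ∀ k, ∀ B ∈ 𝓔 (k + 1), ∃! A, A ∈ 𝓔 k ∧ B ⊆ A)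
    (hdown : ∀ k, ∀ A ∈ 𝓔 k, ∃ B ∈ 𝓔 (k + 1), B ⊆ A)
    (hpos : ∀ k, ∀ A ∈ 𝓔 k, 0 < volume A)
    (hdens : ∀ k, ∀ A ∈ 𝓔 k,
      ENNReal.ofReal (Δ k) * volume A ≤ volume (⋃₀ 𝓔 (k + 1) ∩ A))
    (hprod : ∃ p > (0 : ℝ), ∀ N : ℕ, p ≤ ∏ k ∈ Finset.range N, Δ k) :
    0 < volume (⋂ k, ⋃₀ 𝓔 k) :=
  stmt_15_general n 𝓔 Δ hΔ hne hcpt hdisj hnest hpos hdens hprod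
end
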